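/- Define words over the alphabet {a_0, a_1, a_2, …} by w_0 = a_0 and w_ℓ = w_{ℓ−1} a_ℓ w_{ℓ−1} for ℓ ≥ 1, and let w_k' denote w_k with its last letter removed (so w_k = w_k' a_0). Then for every k ≥ 0, w_k ∼_k w_k', i.e., sub_k(w_k) = sub_k(w_k'). -/
import Mathlib


/-- `subk k w` is the set of scattered subwords of `w` of length at most `k`. -/
def subk {α : Type*} (k : ℕ) (w : List α) : Set (List α) :=
  {u | u.length ≤ k ∧ u.Sublist w}

/-- Two words are `k`-equivalent if they have the same subwords of length at most `k`. -/
def kEquiv {α : Type*} (k : ℕ) (u v : List α) : Prop :=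
  subk k u = subk k v

/-- A language is `k`-piecewise testable (Simon's characterization):
`k`-equivalent words are equi-members. -/
def IsPT {α : Type*} (k : ℕ) (L : Language α) : Prop :=
  ∀ u v : List α, kEquiv k u v → (u ∈ L ↔ v ∈ L)

/-- A DFA is minimal if all states are reachable and pairwise distinguishable. -/
def IsMinimalDFA {α σ : Type*} (A : DFA α σ) : Prop :=
  (∀ q : σ, ∃ w : List α, A.eval w = q) ∧
  ∀ p q : σ,
    (∀ w : List α, (A.evalFrom p w ∈ A.accept ↔ A.evalFrom q w ∈ A.accept)) → p = q

/-- There is a simple path (pairwise distinct states) with `m` transitions in the DFA `A`. -/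
def DFAHasSimplePath {α σ : Type*} (A : DFA α σ) (m : ℕ) : Prop :=
  ∃ (qs : Fin (m + 1) → σ) (as : Fin m → α),
    Function.Injective qs ∧ ∀ i : Fin m, A.step (qs i.castSucc) (as i) = qs i.succ

/-- The depth of a DFA: the number of transitions on a longest simple path. -/
noncomputable def dfaDepth {α σ : Type*} (A : DFA α σ) : ℕ :=
  sSup {m | DFAHasSimplePath A m}

/-- There is a simple path (pairwise distinct states) with `m` transitions in the NFA `A`. -/
def NFAHasSimplePath {α σ : Type*} (A : NFA α σ) (m : ℕ) : Prop :=
  ∃ (qs : Fin (m + 1) → σ) (as : Fin m → α),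
    Function.Injective qs ∧ ∀ i : Fin m, qs i.succ ∈ A.step (qs i.castSucc) (as i)

/-- The depth of an NFA: the number of transitions on a longest simple path. -/
noncomputable def nfaDepth {α σ : Type*} (A : NFA α σ) : ℕ :=
  sSup {m | NFAHasSimplePath A m}

/-- The words `w_ℓ` over the alphabet `{a_0, a_1, a_2, …}` (letter `a_i` modeled by
the natural number `i`): `w_0 = a_0` and `w_ℓ = w_{ℓ-1} a_ℓ w_{ℓ-1}`. -/
def W : ℕ → List ℕ
  | 0 => [0]
  | l + 1 => W l ++ (l + 1) :: W l

/-- `w_k` is `k`-equivalent to `w_k'`, the word `w_k` with its last letter (`a_0`)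
removed. -/
lemma W_ne_nil (k : ℕ) : W k ≠ [] := by
  cases k <;> simp [W]

lemma W_concat (k : ℕ) : W k = (W k).dropLast ++ [0] := by
  induction k with
  | zero => simp [W]
  | succ n ih =>
    have h : W (n + 1) = (W n ++ (n + 1) :: (W n).dropLast) ++ [0] := by
      conv_lhs => rw [show W (n+1) = W n ++ (n+1) :: W n from rfl]
      rw [ih]; simp
    rw [h, List.dropLast_concat]

lemma W_dropLast_succ (k : ℕ) :
    (W (k + 1)).dropLast = W k ++ (k + 1) :: (W k).dropLast := by
  have h : W (k + 1) = (W k ++ (k + 1) :: (W k).dropLast) ++ [0] := by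
    conv_lhs => rw [show W (k+1) = W k ++ (k+1) :: W k from rfl]
    rw [W_concat k]; simp
  rw [h, List.dropLast_concat]

lemma W_main : ∀ k (u : List ℕ), u.length ≤ k → u.Sublist (W k) →
    u.Sublist ((W k).dropLast) := by
  intro k
  induction k with
  | zero =>
    intro u hl hs
    have : u = [] := List.length_eq_zero_iff.mp (Nat.le_zero.mp hl)
    simp [this]
  | succ n ih =>
    intro u hl hs
    rw [W_dropLast_succ]
    have hs' : u.Sublist (W n ++ (n + 1) :: W n) := hs
    obtain ⟨x, y, rfl, hx, hy⟩ := List.sublist_append_iff.mp hs'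
    rcases List.sublist_cons_iff.mp hy with hcase | ⟨y', rfl, hy'⟩
    rotate_left
    · -- y = (n+1) :: y'
      have hlen : y'.length ≤ n := by
        have := hl; simp at this; omega
      exact hx.append ((ih y' hlen hy').cons₂ _)
    · -- y <+ W n
      rcases eq_or_ne x [] with rfl | hx0
      · simp only [List.nil_append]
        exact hcase.trans (List.sublist_append_left _ _)
      · have hlen : y.length ≤ n := by
          have hx1 : 1 ≤ x.length := by
            cases x with
            | nil => exact absurd rfl hx0
            | cons a t => simp
          have := hl; simp at this; omega
        exact hx.append ((ih y hlen hcase).trans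
          (List.sublist_cons_self _ _))

theorem stmt13 (k : ℕ) :
    W k = (W k).dropLast ++ [0] ∧ kEquiv k (W k) ((W k).dropLast) := by
  refine ⟨W_concat k, ?_⟩
  unfold kEquiv subk
  ext u
  simp only [Set.mem_setOf_eq]
  constructor
  · rintro ⟨h1, h2⟩
    exact ⟨h1, W_main k u h1 h2⟩
  · rintro ⟨h1, h2⟩
    exact ⟨h1, h2.trans (List.dropLast_sublist _)⟩
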